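/- arXiv:1604.07133 — 2 statements merged into one kernel-verified Lean document; each statement's English description precedes it below -/
import Mathlib

section
/- For n ≥ 4, the spectrum of the commuting graph of the quasidihedral group QD_{2^n} is {(-1) with multiplicity 2^n - 2^{n-2} - 3, 1 with multiplicity 2^{n-2}, and 2^{n-1} - 3 with multiplicity 1}. -/
open Polynomial

/-- The commuting graph of a group: vertices are non-central elements,
adjacent iff distinct and commuting. -/
def commGraph (G : Type*) [Group G] : SimpleGraph {x : G // x ∉ Subgroup.center G} where
  Adj x y := x ≠ y ∧ (x : G) * y = y * x
  symm := by constructor; rintro x y ⟨h1, h2⟩; exact ⟨h1.symm, h2.symm⟩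
  loopless := by constructor; rintro x ⟨h, _⟩; exact h rfl

/-- The characteristic polynomial (over ℝ) of the adjacency matrix of the
commuting graph of a finite group. -/
noncomputable def commCharpoly (G : Type*) [Group G] [Finite G] : Polynomial ℝ := by
  classical
  have : Fintype G := Fintype.ofFinite G
  exact (SimpleGraph.adjMatrix ℝ (commGraph G)).charpoly

/-- The disjoint union of `k` copies of the complete graph on `m` vertices. -/
def completeUnion (k m : ℕ) : SimpleGraph (Fin k × Fin m) where
  Adj x y := x ≠ y ∧ x.1 = y.1
  symm := by constructor; rintro x y ⟨h1, h2⟩; exact ⟨h1.symm, h2.symm⟩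
  loopless := by constructor; rintro x ⟨h, _⟩; exact h rfl

/-!
Put `m = 2 ^ (n - 2)`. Every element of `G` is `a ^ i` or `a ^ i * b`, and conjugation by `b`
multiplies exponents of `a` by `m - 1`. As `4 ∣ m`, `a ^ i` commutes with `a ^ j * b` iff `m ∣ i`,
and `a ^ i * b` commutes with `a ^ j * b` iff `i ≡ j [MOD m]`. So the centre is `{1, a ^ m}` and
commuting is an equivalence relation on the non-central elements: the commuting graph is a clique
on the `2m - 2` non-central powers of `a` together with `m` disjoint edges
`{a ^ i * b, a ^ (i + m) * b}`. The characteristic polynomial of a disjoint union of cliques is the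
product of those of the cliques, and that of `K_c` is `(X + 1) ^ (c - 1) * (X - (c - 1))`.
-/

open Matrix Finset

namespace SimpleGraph

variable {V R : Type*} [Fintype V] [DecidableEq V] [CommRing R]

theorem charpoly_adjMatrix_top [Nonempty V] :
    ((⊤ : SimpleGraph V).adjMatrix R).charpoly
      = (X + 1) ^ (Fintype.card V - 1) * (X - C ((Fintype.card V : R) - 1)) := by
  have hJ : (⊤ : SimpleGraph V).adjMatrix R = vecMulVec 1 1 - scalar V 1 := by
    ext i j
    by_cases h : i = j <;> simp [h, one_apply]
  obtain ⟨c, hc⟩ : ∃ c, Fintype.card V = c + 1 :=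
    Nat.exists_eq_succ_of_ne_zero Fintype.card_ne_zero
  rw [hJ, charpoly_sub_scalar, charpoly_vecMulVec]
  simp only [hc, pow_succ, one_dotProduct_one, Nat.cast_add, Nat.cast_one, add_tsub_cancel_right,
    smul_eq_C_mul, map_add, map_natCast, map_one, sub_comp, mul_comp, pow_comp, X_comp, add_comp,
    natCast_comp, one_comp, add_sub_cancel_right]
  ring

theorem charpoly_adjMatrix_of_adj_iff {ι : Type*} [Fintype ι] [DecidableEq ι]
    (G : SimpleGraph V) [DecidableRel G.Adj] (f : V → ι) (hf : Function.Surjective f)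
    (hadj : ∀ x y, G.Adj x y ↔ x ≠ y ∧ f x = f y) :
    (G.adjMatrix R).charpoly = ∏ i, (X + 1) ^ (Fintype.card {x // f x = i} - 1)
      * (X - C ((Fintype.card {x // f x = i} : R) - 1)) := by
  -- any linear order on the classes makes the adjacency matrix block triangular; take that of `Fin`
  let o := Fintype.equivFin ι
  have hblock : (G.adjMatrix R).BlockTriangular (o ∘ f) := by
    intro x y hxy
    have : f x ≠ f y := fun h => hxy.ne (by simp [h])
    simp [hadj, this]
  rw [hblock.charpoly, Finset.image_univ_of_surjective (o.surjective.comp hf), ← o.prod_comp]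
  refine Finset.prod_congr rfl fun i _ => ?_
  have hsq : (G.adjMatrix R).toSquareBlock (o ∘ f) (o i)
      = (⊤ : SimpleGraph {x // (o ∘ f) x = o i}).adjMatrix R := by
    ext x y
    have hxy : f x = f y := o.injective (x.2.trans y.2.symm)
    by_cases h : x = y <;> simp [toSquareBlock_def, hadj, hxy, h, Subtype.val_injective.ne]
  have hcard : Fintype.card {x // (o ∘ f) x = o i} = Fintype.card {x // f x = i} :=
    Fintype.card_congr (Equiv.subtypeEquivRight fun _ => by simp)
  obtain ⟨x, hx⟩ := hf i
  have : Nonempty {x // (o ∘ f) x = o i} := ⟨⟨x, by simp [hx]⟩⟩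
  rw [hsq, charpoly_adjMatrix_top, hcard]

end SimpleGraph

theorem Int.two_mul_dvd_sub_two_mul_iff {m : ℤ} (hm : 4 ∣ m) (x : ℤ) :
    2 * m ∣ (m - 2) * x ↔ m ∣ x := by
  obtain ⟨k, rfl⟩ := hm
  -- `m - 2 = 2 * (2k - 1)`, and the odd number `2k - 1` is prime to `4k`
  have hcop : IsCoprime (4 * k) (2 * k - 1) := ⟨-(k - 1), 2 * k - 1, by ring⟩
  calc 2 * (4 * k) ∣ (4 * k - 2) * x ↔ 2 * (4 * k) ∣ 2 * ((2 * k - 1) * x) := by ring_nf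
    _ ↔ 4 * k ∣ (2 * k - 1) * x := mul_dvd_mul_iff_left two_ne_zero
    _ ↔ 4 * k ∣ x := ⟨hcop.dvd_of_dvd_mul_left, fun h => h.mul_left _⟩

theorem ZMod.card_filter_cast_eq (m : ℕ) [NeZero m] (j : ZMod m) :
    #{u : ZMod (2 * m) | (u.cast : ZMod m) = j} = 2 := by
  let κ := ZMod.castHom (dvd_mul_left m 2) (ZMod m)
  have hsurj : Function.Surjective κ := ZMod.castHom_surjective _
  have hfib : ∀ j : ZMod m, #{u : ZMod (2 * m) | (u.cast : ZMod m) = j}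
      = #{u : ZMod (2 * m) | (u.cast : ZMod m) = 0} := fun j =>
    AddMonoidHom.card_fiber_eq_of_mem_range κ (hsurj j) (hsurj 0)
  have hsum := card_eq_sum_card_fiberwise (f := fun u : ZMod (2 * m) => (u.cast : ZMod m))
    (s := univ) (t := univ) (by simp)
  simp only [hfib, sum_const, card_univ, ZMod.card, smul_eq_mul] at hsum
  rw [hfib]
  exact (Nat.eq_of_mul_eq_mul_left (Nat.pos_of_neZero m) (by rw [← hsum]; ring)).symm

namespace Quasidihedral

variable {m : ℕ}

/-- `.inl u` stands for `a ^ u` and `.inr u` for `a ^ u * b`; the powers of `a` left out are the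
central ones. -/
abbrev Vertex (m : ℕ) : Type :=
  {u : ZMod (2 * m) // (u.cast : ZMod m) ≠ 0} ⊕ ZMod (2 * m)

namespace Vertex

def elem {G : Type*} [Group G] (a b : G) : Vertex m → G :=
  Sum.elim (fun u => a ^ u.1.val) (fun u => a ^ u.val * b)

def clique : Vertex m → Option (ZMod m) :=
  Sum.elim (fun _ => none) (fun u => some u.cast)

theorem card_clique_none [NeZero m] :
    Fintype.card {w : Vertex m // w.clique = none} = 2 * m - 2 := by
  rw [Fintype.card_subtype, card_filter, Fintype.sum_sum_type]
  simp only [ne_eq, clique, Sum.elim_inl, Sum.elim_inr, reduceIte, reduceCtorEq, sum_const,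
    card_univ, Fintype.card_subtype_compl, ZMod.card, smul_eq_mul, mul_one, mul_zero, add_zero]
  rw [Fintype.card_subtype, ZMod.card_filter_cast_eq]

theorem card_clique_some [NeZero m] (j : ZMod m) :
    Fintype.card {w : Vertex m // w.clique = some j} = 2 := by
  rw [Fintype.card_subtype, card_filter, Fintype.sum_sum_type]
  simp [clique, ZMod.card_filter_cast_eq]

theorem clique_surjective [NeZero m] (hm : 1 < m) :
    Function.Surjective (clique : Vertex m → Option (ZMod m)) := by
  intro o
  obtain ⟨⟨w, hw⟩⟩ : Nonempty {w : Vertex m // w.clique = o} := by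
    rw [← Fintype.card_pos_iff]
    cases o <;> simp only [card_clique_none, card_clique_some] <;> omega
  exact ⟨w, hw⟩

end Vertex

variable {G : Type*} [Group G] {a b : G}

theorem mul_pow_eq_pow_mul (hrel : b * a * b⁻¹ = a ^ (m - 1)) (i : ℕ) :
    b * a ^ i = a ^ ((m - 1) * i) * b := by
  rw [pow_mul, ← hrel, conj_pow, inv_mul_cancel_right]

theorem pow_mul_mul_pow (hrel : b * a * b⁻¹ = a ^ (m - 1)) (i j : ℕ) :
    a ^ i * b * a ^ j = a ^ (i + (m - 1) * j) * b := by
  rw [mul_assoc, mul_pow_eq_pow_mul hrel, ← mul_assoc, pow_add]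

theorem pow_mul_mul_pow_mul (hb : b ^ 2 = 1) (hrel : b * a * b⁻¹ = a ^ (m - 1)) (i j : ℕ) :
    a ^ i * b * (a ^ j * b) = a ^ (i + (m - 1) * j) := by
  rw [← mul_assoc, pow_mul_mul_pow hrel, mul_assoc, ← sq, hb, mul_one]

theorem pow_add_mul_eq_pow_add_mul_iff [NeZero m] (hm : 4 ∣ m) (ha : orderOf a = 2 * m)
    (i j : ℕ) : a ^ (i + (m - 1) * j) = a ^ (j + (m - 1) * i) ↔ i ≡ j [MOD m] := by
  rw [pow_eq_pow_iff_modEq, ha, Nat.modEq_iff_dvd, Nat.modEq_iff_dvd]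
  have h1 : 1 ≤ m := NeZero.one_le
  have : ((j + (m - 1) * i : ℕ) : ℤ) - (i + (m - 1) * j : ℕ) = ((m : ℤ) - 2) * (i - j) := by
    push_cast [h1]; ring
  rw [this, Nat.cast_mul, Nat.cast_ofNat, Int.two_mul_dvd_sub_two_mul_iff (by exact_mod_cast hm),
    dvd_sub_comm]

theorem commute_pow_pow_mul_iff [NeZero m] (hm : 4 ∣ m) (ha : orderOf a = 2 * m)
    (hrel : b * a * b⁻¹ = a ^ (m - 1)) (i j : ℕ) :
    Commute (a ^ i) (a ^ j * b) ↔ m ∣ i := by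
  have key := pow_add_mul_eq_pow_add_mul_iff hm ha i 0
  rw [mul_zero, add_zero, zero_add, Nat.modEq_zero_iff_dvd] at key
  rw [← key, Commute, SemiconjBy, pow_mul_mul_pow hrel, ← mul_assoc, ← pow_add,
    mul_left_inj, add_comm, pow_add, pow_add, mul_left_cancel_iff, eq_comm]

theorem commute_pow_mul_pow_mul_iff [NeZero m] (hm : 4 ∣ m) (ha : orderOf a = 2 * m)
    (hb : b ^ 2 = 1) (hrel : b * a * b⁻¹ = a ^ (m - 1)) (i j : ℕ) :
    Commute (a ^ i * b) (a ^ j * b) ↔ i ≡ j [MOD m] := by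
  rw [Commute, SemiconjBy, pow_mul_mul_pow_mul hb hrel, pow_mul_mul_pow_mul hb hrel,
    pow_add_mul_eq_pow_add_mul_iff hm ha]

theorem notMem_zpowers [NeZero m] (hm : 4 ∣ m) (ha : orderOf a = 2 * m)
    (hrel : b * a * b⁻¹ = a ^ (m - 1)) : b ∉ Subgroup.zpowers a := by
  rintro ⟨k, rfl⟩
  have h := (commute_pow_pow_mul_iff hm ha hrel 1 0).mp (by simp)
  have := Nat.eq_one_of_dvd_one h
  omega

theorem exists_eq_pow_or_eq_pow_mul [Finite G] [NeZero m] (hm : 4 ∣ m)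
    (ha : orderOf a = 2 * m) (hb : b ^ 2 = 1) (hrel : b * a * b⁻¹ = a ^ (m - 1))
    (hcard : Nat.card G = 4 * m) (g : G) :
    ∃ k : ℕ, g = a ^ k ∨ g = a ^ k * b := by
  have hindex : (Subgroup.zpowers a).index = 2 := by
    have h := (Subgroup.zpowers a).index_mul_card
    rw [Nat.card_zpowers, ha, hcard, show 4 * m = 2 * (2 * m) by ring] at h
    exact Nat.eq_of_mul_eq_mul_right (by simp [Nat.pos_of_neZero]) h
  by_cases hg : g ∈ Subgroup.zpowers a
  · obtain ⟨k, rfl⟩ := mem_powers_iff_mem_zpowers.mpr hg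
    exact ⟨k, Or.inl rfl⟩
  · have : g * b ∈ Subgroup.zpowers a := by
      rw [Subgroup.mul_mem_iff_of_index_two hindex]
      exact iff_of_false hg (notMem_zpowers hm ha hrel)
    obtain ⟨k, hk⟩ := mem_powers_iff_mem_zpowers.mpr this
    refine ⟨k, Or.inr ?_⟩
    rw [show a ^ k = g * b from hk, mul_assoc, ← sq, hb, mul_one]

theorem pow_mem_center_iff [Finite G] [NeZero m] (hm : 4 ∣ m) (ha : orderOf a = 2 * m)
    (hb : b ^ 2 = 1) (hrel : b * a * b⁻¹ = a ^ (m - 1)) (hcard : Nat.card G = 4 * m) (i : ℕ) :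
    a ^ i ∈ Subgroup.center G ↔ m ∣ i := by
  rw [Subgroup.mem_center_iff]
  refine ⟨fun h => ?_, fun h g => ?_⟩
  · rw [← commute_pow_pow_mul_iff hm ha hrel i 0, pow_zero, one_mul]
    exact (h b).symm
  · obtain ⟨k, rfl | rfl⟩ := exists_eq_pow_or_eq_pow_mul hm ha hb hrel hcard g
    · exact pow_mul_comm a k i
    · exact ((commute_pow_pow_mul_iff hm ha hrel i k).mpr h).symm

theorem pow_mul_notMem_center [NeZero m] (hm : 4 ∣ m) (ha : orderOf a = 2 * m)
    (hrel : b * a * b⁻¹ = a ^ (m - 1)) (i : ℕ) : a ^ i * b ∉ Subgroup.center G := by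
  intro h
  have h1 := (commute_pow_pow_mul_iff hm ha hrel 1 i).mp
    (by rw [pow_one]; exact Subgroup.mem_center_iff.mp h a)
  have := Nat.eq_one_of_dvd_one h1
  omega

theorem pow_val_natCast (ha : orderOf a = 2 * m) (k : ℕ) :
    a ^ (k : ZMod (2 * m)).val = a ^ k := by
  rw [ZMod.val_natCast, ← ha, pow_mod_orderOf]

namespace Vertex

theorem elem_injective [NeZero m] (hm : 4 ∣ m) (ha : orderOf a = 2 * m)
    (hrel : b * a * b⁻¹ = a ^ (m - 1)) :
    Function.Injective (elem a b : Vertex m → G) := by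
  have hpow : Function.Injective fun u : ZMod (2 * m) => a ^ u.val := by
    intro u v h
    refine ZMod.val_injective _ (pow_injOn_Iio_orderOf ?_ ?_ h) <;> simp [ha, ZMod.val_lt]
  have hne : ∀ u v : ZMod (2 * m), a ^ u.val ≠ a ^ v.val * b := by
    intro u v h
    apply notMem_zpowers hm ha hrel
    rw [eq_inv_mul_of_mul_eq h.symm]
    exact mul_mem (inv_mem (Subgroup.npow_mem_zpowers a _)) (Subgroup.npow_mem_zpowers a _)
  rintro (u | u) (v | v) h
  · exact congrArg Sum.inl (Subtype.ext (hpow h))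
  · exact absurd h (hne _ _)
  · exact absurd h.symm (hne _ _)
  · exact congrArg Sum.inr (hpow (mul_right_cancel h))

theorem elem_notMem_center [Finite G] [NeZero m] (hm : 4 ∣ m) (ha : orderOf a = 2 * m)
    (hb : b ^ 2 = 1) (hrel : b * a * b⁻¹ = a ^ (m - 1)) (hcard : Nat.card G = 4 * m)
    (w : Vertex m) : elem a b w ∉ Subgroup.center G := by
  rcases w with ⟨u, hu⟩ | u
  · rwa [elem, Sum.elim_inl, pow_mem_center_iff hm ha hb hrel hcard, ← ZMod.natCast_eq_zero_iff,
      ← ZMod.cast_eq_val]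
  · exact pow_mul_notMem_center hm ha hrel _

theorem exists_elem_eq [Finite G] [NeZero m] (hm : 4 ∣ m) (ha : orderOf a = 2 * m)
    (hb : b ^ 2 = 1) (hrel : b * a * b⁻¹ = a ^ (m - 1)) (hcard : Nat.card G = 4 * m)
    {g : G} (hg : g ∉ Subgroup.center G) : ∃ w : Vertex m, elem a b w = g := by
  obtain ⟨k, rfl | rfl⟩ := exists_eq_pow_or_eq_pow_mul hm ha hb hrel hcard g
  · refine ⟨.inl ⟨k, ?_⟩, pow_val_natCast ha k⟩
    rwa [ZMod.cast_eq_val, ne_eq, ZMod.natCast_eq_zero_iff,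
      ← pow_mem_center_iff hm ha hb hrel hcard, pow_val_natCast ha]
  · exact ⟨.inr k, by rw [elem, Sum.elim_inr, pow_val_natCast ha]⟩

theorem commute_elem_iff [NeZero m] (hm : 4 ∣ m) (ha : orderOf a = 2 * m)
    (hb : b ^ 2 = 1) (hrel : b * a * b⁻¹ = a ^ (m - 1)) (v w : Vertex m) :
    Commute (elem a b v) (elem a b w) ↔ v.clique = w.clique := by
  rcases v with ⟨u, hu⟩ | u <;> rcases w with ⟨v, hv⟩ | v <;>
    simp only [elem, clique, Sum.elim_inl, Sum.elim_inr, reduceCtorEq, iff_false, Option.some_inj]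
  · exact iff_of_true (Commute.pow_pow_self a _ _) trivial
  · rwa [commute_pow_pow_mul_iff hm ha hrel, ← ZMod.natCast_eq_zero_iff, ← ZMod.cast_eq_val]
  · rwa [Commute.symm_iff, commute_pow_pow_mul_iff hm ha hrel, ← ZMod.natCast_eq_zero_iff,
      ← ZMod.cast_eq_val]
  · rw [commute_pow_mul_pow_mul_iff hm ha hb hrel, ZMod.cast_eq_val, ZMod.cast_eq_val,
      ZMod.natCast_eq_natCast_iff]

end Vertex

open Vertex

noncomputable def equivNoncentral [Finite G] [NeZero m] (hm : 4 ∣ m) (ha : orderOf a = 2 * m)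
    (hb : b ^ 2 = 1) (hrel : b * a * b⁻¹ = a ^ (m - 1)) (hcard : Nat.card G = 4 * m) :
    Vertex m ≃ {x : G // x ∉ Subgroup.center G} :=
  Equiv.ofBijective (fun w => ⟨elem a b w, elem_notMem_center hm ha hb hrel hcard w⟩)
    ⟨fun _ _ h => elem_injective hm ha hrel (congrArg Subtype.val h),
      fun x => (exists_elem_eq hm ha hb hrel hcard x.2).imp fun _ hw => Subtype.ext hw⟩

theorem commGraph_adj_iff [Finite G] [NeZero m] (hm : 4 ∣ m) (ha : orderOf a = 2 * m)
    (hb : b ^ 2 = 1) (hrel : b * a * b⁻¹ = a ^ (m - 1)) (hcard : Nat.card G = 4 * m)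
    (x y : {x : G // x ∉ Subgroup.center G}) :
    (commGraph G).Adj x y ↔ x ≠ y ∧ ((equivNoncentral hm ha hb hrel hcard).symm x).clique
      = ((equivNoncentral hm ha hb hrel hcard).symm y).clique := by
  have he : ∀ x, elem a b ((equivNoncentral hm ha hb hrel hcard).symm x) = x := fun x =>
    congrArg Subtype.val ((equivNoncentral hm ha hb hrel hcard).apply_symm_apply x)
  rw [← commute_elem_iff hm ha hb hrel, he, he]
  rfl

theorem commCharpoly_eq [Finite G] [NeZero m] (hm : 4 ∣ m) (ha : orderOf a = 2 * m)
    (hb : b ^ 2 = 1) (hrel : b * a * b⁻¹ = a ^ (m - 1)) (hcard : Nat.card G = 4 * m) :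
    commCharpoly G = (X + 1) ^ (3 * m - 3) * (X - 1) ^ m * (X - C (2 * (m : ℝ) - 3)) := by
  classical
  let := Fintype.ofFinite G
  set e := equivNoncentral hm ha hb hrel hcard
  have hcliques : ∀ o, Fintype.card {x // (e.symm x).clique = o}
      = Fintype.card {w : Vertex m // w.clique = o} := fun o =>
    Fintype.card_congr (e.symm.subtypeEquiv fun _ => Iff.rfl)
  have hm1 : 1 < m := by obtain ⟨k, rfl⟩ := hm; have := NeZero.ne (4 * k); omega
  show (SimpleGraph.adjMatrix ℝ (commGraph G)).charpoly = _
  rw [SimpleGraph.charpoly_adjMatrix_of_adj_iff _ (fun x => (e.symm x).clique)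
      ((clique_surjective hm1).comp e.symm.surjective) (commGraph_adj_iff hm ha hb hrel hcard),
    Fintype.prod_option]
  simp only [hcliques, card_clique_none, card_clique_some, prod_const, card_univ, ZMod.card]
  have hexp : 3 * m - 3 = 2 * m - 2 - 1 + m := by omega
  have hcast : ((2 * m - 2 : ℕ) : ℝ) - 1 = 2 * m - 3 := by
    rw [Nat.cast_sub (by omega)]; push_cast; ring
  rw [hexp, hcast, pow_add, mul_pow, Nat.add_one_sub_one, pow_one, Nat.cast_ofNat,
    show (2 : ℝ) - 1 = 1 by norm_num, map_one]
  ring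

end Quasidihedral

theorem spec_commGraph_quasidihedral_general
    (n : ℕ) (hn : 4 ≤ n) (G : Type*) [Group G] [Finite G]
    (a b : G) (ha : orderOf a = 2 ^ (n - 1)) (hb : orderOf b = 2)
    (hrel : b * a * b⁻¹ = a ^ (2 ^ (n - 2) - 1))
    (hcard : Nat.card G = 2 ^ n) :
    commCharpoly G =
      (X + 1) ^ (2 ^ n - 2 ^ (n - 2) - 3) * (X - 1) ^ (2 ^ (n - 2))
        * (X - C ((2 : ℝ) ^ (n - 1) - 3)) := by
  have hn1 : 2 ^ (n - 1) = 2 * 2 ^ (n - 2) := by rw [← pow_succ']; congr 1; omega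
  have hn0 : 2 ^ n = 4 * 2 ^ (n - 2) := by
    rw [show 4 = 2 ^ 2 by rfl, ← pow_add]; congr 1; omega
  have hm : 4 ∣ 2 ^ (n - 2) := (pow_dvd_pow 2 (by omega : 2 ≤ n - 2) :)
  rw [Quasidihedral.commCharpoly_eq hm (ha.trans hn1) (hb ▸ pow_orderOf_eq_one b) hrel
    (hcard.trans hn0), hn0]
  rw [show (2 : ℝ) ^ (n - 1) = 2 * 2 ^ (n - 2) by exact_mod_cast hn1]
  congr 3
  · omega
  · push_cast; ring

/-- For `n ≥ 4`, the spectrum of the commuting graph of the quasidihedral group `QD_{2^n}`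
is `{(-1)^{2^n - 2^{n-2} - 3}, 1^{2^{n-2}}, (2^{n-1} - 3)^1}`. -/
theorem spec_commGraph_quasidihedral
    (n : ℕ) (hn : 4 ≤ n) (G : Type*) [Group G] [Finite G]
    (a b : G) (ha : orderOf a = 2 ^ (n - 1)) (hb : orderOf b = 2)
    (hrel : b * a * b⁻¹ = a ^ (2 ^ (n - 2) - 1))
    (hcard : Nat.card G = 2 ^ n)
    (hgen : Subgroup.closure ({a, b} : Set G) = ⊤) :
    commCharpoly G =
      (X + 1) ^ (2 ^ n - 2 ^ (n - 2) - 3) * (X - 1) ^ (2 ^ (n - 2))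
        * (X - C ((2 : ℝ) ^ (n - 1) - 3)) :=
  spec_commGraph_quasidihedral_general n hn G a b ha hb hrel hcard
end

section
/- The commuting graph of SL(2, 3) is isomorphic to 3·K_2 ⊔ 4·K_4, and its spectrum is {(-1) with multiplicity 15, 1 with multiplicity 3, 3 with multiplicity 4}. -/
open Polynomial

/-! ### Auxiliary setup for `SL(2,3)` -/

abbrev G3 := Matrix.SpecialLinearGroup (Fin 2) (ZMod 3)

instance : DecidableEq G3 := fun a b => decidable_of_iff (a.1 = b.1) Subtype.ext_iff.symm

instance : DecidablePred (· ∈ Subgroup.center G3) :=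
  fun _ => decidable_of_iff _ (Subgroup.mem_center_iff).symm

def f0 : Fin 3 × Fin 2 ⊕ Fin 4 × Fin 4 → Matrix (Fin 2) (Fin 2) (ZMod 3) :=
  Sum.elim
    (fun p => ![![!![0,1;2,0], !![0,2;1,0]],
                ![!![1,1;1,2], !![2,2;2,1]],
                ![!![1,2;2,2], !![2,1;1,1]]] p.1 p.2)
    (fun p => ![![!![0,1;2,1], !![0,2;1,2], !![1,2;1,0], !![2,1;2,0]],
                ![!![0,1;2,2], !![0,2;1,1], !![1,1;2,0], !![2,2;1,0]],
                ![!![1,0;1,1], !![1,0;2,1], !![2,0;1,2], !![2,0;2,2]],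
                ![!![1,1;0,1], !![1,2;0,1], !![2,1;0,2], !![2,2;0,2]]] p.1 p.2)

lemma f0_det : ∀ s, (f0 s).det = 1 := by decide

def g0 (s : Fin 3 × Fin 2 ⊕ Fin 4 × Fin 4) : G3 := ⟨f0 s, f0_det s⟩

lemma g0_mem : ∀ s, g0 s ∉ Subgroup.center G3 := by decide

lemma g0_inj : Function.Injective g0 := by decide

abbrev V3 := {x : G3 // x ∉ Subgroup.center G3}

def fV (s : Fin 3 × Fin 2 ⊕ Fin 4 × Fin 4) : V3 := ⟨g0 s, g0_mem s⟩

lemma card_V3 : Fintype.card V3 = 22 := by decide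

lemma fV_bij : Function.Bijective fV := by
  rw [Fintype.bijective_iff_injective_and_card]
  refine ⟨fun a b h => g0_inj (congrArg Subtype.val h), by rw [card_V3]; simp⟩

instance (G : Type*) [Group G] [DecidableEq G] : DecidableRel (commGraph G).Adj :=
  fun x y => inferInstanceAs (Decidable (x ≠ y ∧ (x : G) * y = (y : G) * x))

instance (k m : ℕ) : DecidableRel (completeUnion k m).Adj :=
  fun x y => inferInstanceAs (Decidable (x ≠ y ∧ x.1 = y.1))

instance {α β : Type*} (G : SimpleGraph α) (H : SimpleGraph β)
    [DecidableRel G.Adj] [DecidableRel H.Adj] : DecidableRel (G ⊕g H).Adj := fun u v =>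
  match u, v with
  | Sum.inl a, Sum.inl b => inferInstanceAs (Decidable (G.Adj a b))
  | Sum.inr a, Sum.inr b => inferInstanceAs (Decidable (H.Adj a b))
  | Sum.inl _, Sum.inr _ => inferInstanceAs (Decidable (false = true))
  | Sum.inr _, Sum.inl _ => inferInstanceAs (Decidable (false = true))

lemma adj_iff : ∀ a b, (commGraph G3).Adj (fV a) (fV b) ↔
    (completeUnion 3 2 ⊕g completeUnion 4 4).Adj a b := by decide

noncomputable def isoE : (completeUnion 3 2 ⊕g completeUnion 4 4) ≃g commGraph G3 :=
  { toEquiv := Equiv.ofBijective fV fV_bij, map_rel_iff' := fun {a b} => adj_iff a b }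

/-! ### Charpoly lemmas -/

lemma charpoly_submatrix {n m R : Type*} [CommRing R] [Fintype n] [Fintype m]
    [DecidableEq n] [DecidableEq m] (e : n ≃ m) (M : Matrix m m R) :
    (M.submatrix e e).charpoly = M.charpoly := by
  have := Matrix.charpoly_reindex (R := R) e.symm M
  rwa [Matrix.reindex_apply, Equiv.symm_symm] at this

lemma charpoly_blockDiagonal {o n R : Type*} [CommRing R] [Fintype o] [Fintype n]
    [DecidableEq o] [DecidableEq n] (M : o → Matrix n n R) :
    (Matrix.blockDiagonal M).charpoly = ∏ i, (M i).charpoly := by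
  unfold Matrix.charpoly
  rw [← Matrix.det_blockDiagonal]
  congr 1
  ext ⟨i, b⟩ ⟨j, b'⟩
  by_cases hb : b = b' <;> by_cases hij : i = j <;>
    simp [Matrix.charmatrix_apply, Matrix.blockDiagonal_apply, Matrix.diagonal_apply,
      Prod.ext_iff, hb, hij]

/-- adjacency matrix of complete graph on `Fin m` -/
def Km (m : ℕ) : Matrix (Fin m) (Fin m) ℝ := Matrix.of fun i j => if i = j then 0 else 1

lemma adj_cu (k m : ℕ) : SimpleGraph.adjMatrix ℝ (completeUnion k m)
    = (Matrix.blockDiagonal fun _ : Fin k => Km m).submatrix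
        (Equiv.prodComm (Fin k) (Fin m)) (Equiv.prodComm (Fin k) (Fin m)) := by
  ext ⟨b, i⟩ ⟨c, j⟩
  by_cases hbc : b = c <;> by_cases hij : i = j <;>
    simp [SimpleGraph.adjMatrix_apply, Matrix.blockDiagonal_apply, Km, completeUnion,
      Prod.ext_iff, hbc, hij]

lemma charpoly_cu (k m : ℕ) :
    (SimpleGraph.adjMatrix ℝ (completeUnion k m)).charpoly = (Km m).charpoly ^ k := by
  rw [adj_cu, charpoly_submatrix, charpoly_blockDiagonal]
  simp

lemma charpoly_K2 : (Km 2).charpoly = (X - 1) * (X + 1) := by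
  rw [Matrix.charpoly, Matrix.det_fin_two]
  simp [Matrix.charmatrix_apply, Matrix.diagonal_apply, Km]
  ring

set_option maxHeartbeats 1000000 in
lemma charpoly_K4 : (Km 4).charpoly = (X - 3) * (X + 1) ^ 3 := by
  rw [Matrix.charpoly]
  simp (config := { decide := true }) [Matrix.det_succ_row_zero, Fin.sum_univ_succ,
    Fin.succAbove, Matrix.charmatrix_apply, Matrix.diagonal_apply, Km]
  ring

/-- The commuting graph of `SL(2, 3)` is isomorphic to `3·K₂ ⊔ 4·K₄`, and its
spectrum is `{(-1)^15, 1^3, 3^4}`. -/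
theorem commGraph_SL23 :
    Nonempty (commGraph (Matrix.SpecialLinearGroup (Fin 2) (ZMod 3)) ≃g
        (completeUnion 3 2 ⊕g completeUnion 4 4)) ∧
      commCharpoly (Matrix.SpecialLinearGroup (Fin 2) (ZMod 3)) =
        (X + 1) ^ 15 * (X - 1) ^ 3 * (X - 3) ^ 4 := by
  constructor
  · exact ⟨isoE.symm⟩
  · have hmain : (SimpleGraph.adjMatrix ℝ (commGraph G3)).charpoly =
        (X + 1) ^ 15 * (X - 1) ^ 3 * (X - 3) ^ 4 := by
      have h1 : SimpleGraph.adjMatrix ℝ (commGraph G3)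
          = (SimpleGraph.adjMatrix ℝ (completeUnion 3 2 ⊕g completeUnion 4 4)).submatrix
              isoE.symm.toEquiv isoE.symm.toEquiv := by
        ext x y
        simp only [Matrix.submatrix_apply, SimpleGraph.adjMatrix_apply]
        by_cases h : (commGraph G3).Adj x y
        · rw [if_pos h, if_pos (show (completeUnion 3 2 ⊕g completeUnion 4 4).Adj
            (isoE.symm.toEquiv x) (isoE.symm.toEquiv y) from isoE.symm.map_adj_iff.mpr h)]
        · rw [if_neg h, if_neg (show ¬ (completeUnion 3 2 ⊕g completeUnion 4 4).Adj
            (isoE.symm.toEquiv x) (isoE.symm.toEquiv y) from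
              fun hc => h (isoE.symm.map_adj_iff.mp hc))]
      have h3 : SimpleGraph.adjMatrix ℝ (completeUnion 3 2 ⊕g completeUnion 4 4)
          = Matrix.fromBlocks (SimpleGraph.adjMatrix ℝ (completeUnion 3 2)) 0 0
              (SimpleGraph.adjMatrix ℝ (completeUnion 4 4)) := by
        ext (x | x) (y | y) <;> simp [SimpleGraph.sum_adj]
      rw [h1, charpoly_submatrix, h3, Matrix.charpoly_fromBlocks_zero₂₁,
        charpoly_cu, charpoly_cu, charpoly_K2, charpoly_K4]
      ring
    have : commCharpoly G3 = (SimpleGraph.adjMatrix ℝ (commGraph G3)).charpoly := by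
      unfold commCharpoly
      congr!
    rw [this, hmain]
end
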